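/- There does not exist a constant equivalent representing a binary relation on l∞ that satisfies axioms (A1)–(A5), ISU, and Invariance with respect to Permutation of Improving Sequences (IPIS); that is, no binary relation ≿ on l∞ satisfying (A1)–(A5), ISU, and IPIS admits a function I : l∞ → ℝ with x ∼ I(x) for all x ∈ l∞. -/

import Mathlib

open scoped ENNReal BoundedContinuousFunction

noncomputable section

/-- `l∞`: the Banach space of bounded real sequences with the sup norm. -/
abbrev Linf : Type := BoundedContinuousFunction ℕ ℝ

/-- `ba(ℕ)`: the norm dual of `l∞`, endowed with the weak* topology. -/
abbrev Ba : Type := WeakDual ℝ Linf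

/-- The constant sequence `(θ, θ, ...)`. -/
def cst (θ : ℝ) : Linf := BoundedContinuousFunction.const ℕ θ

/-- Build an element of `l∞` from a bounded sequence. -/
def ofSeq (f : ℕ → ℝ) (C : ℝ) (h : ∀ n, |f n| ≤ C) : Linf :=
  BoundedContinuousFunction.ofNormedAddCommGroupDiscrete f C
    (by simpa [Real.norm_eq_abs] using h)

/-- The delayed sequence `(0, d₀, d₁, d₂, ...)`. -/
def delaySeq (d : Linf) : Linf :=
  ofSeq (fun n => if n = 0 then 0 else d (n - 1)) ‖d‖ (by
    intro n
    by_cases h : n = 0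
    · simp [h]
    · simpa [h, Real.norm_eq_abs] using d.norm_coe_le_norm (n - 1))

/-- The shifted sequence `(x₁, x₂, x₃, ...)`. -/
def shiftSeq (x : Linf) : Linf :=
  x.compContinuous ⟨fun n => n + 1, continuous_of_discreteTopology⟩

/-- The permuted sequence `x_σ = (x_{σ 0}, x_{σ 1}, ...)`. -/
def permSeq (σ : Equiv.Perm ℕ) (x : Linf) : Linf :=
  x.compContinuous ⟨fun n => σ n, continuous_of_discreteTopology⟩

/-- The indicator sequence of a set `A ⊆ ℕ`. -/
def indic (A : Set ℕ) : Linf :=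
  ofSeq (A.indicator fun _ => (1 : ℝ)) 1 (by
    intro n
    by_cases h : n ∈ A
    · simp [Set.indicator_of_mem h]
    · simp [Set.indicator_of_notMem h])

/-- `kEx`: the sequence equal to `k` on `E` and to `x` off `E`. -/
def patch (k : ℝ) (E : Set ℕ) (x : Linf) : Linf :=
  ofSeq (fun n => E.indicator (fun _ => k) n + Eᶜ.indicator (fun m => x m) n)
    (|k| + ‖x‖) (by
    intro n
    by_cases h : n ∈ E
    · simp only [Set.indicator_of_mem h, Set.indicator_of_notMem (by simpa using h :
        n ∉ Eᶜ), add_zero]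
      exact le_add_of_le_of_nonneg le_rfl (norm_nonneg x)
    · simp only [Set.indicator_of_notMem h, Set.indicator_of_mem (by simpa using h :
        n ∈ Eᶜ), zero_add]
      calc |x n| ≤ ‖x‖ := by simpa [Real.norm_eq_abs] using x.norm_coe_le_norm n
      _ ≤ |k| + ‖x‖ := le_add_of_nonneg_left (abs_nonneg k))

/-- The exponential discounted sum `(1-δ) ∑ δ^t x_t` (convention `0^0 = 1`). -/
def discSum (δ : ℝ) (x : Linf) : ℝ := (1 - δ) * ∑' t, δ ^ t * x t

/-! ### Axioms -/

/-- The strict (asymmetric) part of a relation. -/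
def SPref (R : Linf → Linf → Prop) (x y : Linf) : Prop := R x y ∧ ¬ R y x

/-- (A1) Weak order: complete and transitive. -/
def A1 (R : Linf → Linf → Prop) : Prop :=
  (∀ x y, R x y ∨ R y x) ∧ ∀ x y z, R x y → R y z → R x z

/-- (A2) Monotonicity. -/
def A2 (R : Linf → Linf → Prop) : Prop :=
  (∀ x y : Linf, (∀ n, y n ≤ x n) → R x y) ∧ SPref R (cst 1) (cst 0)

/-- (A3) Continuity. -/
def A3 (R : Linf → Linf → Prop) : Prop := ∀ x y z : Linf,
  IsClosed {α : ℝ | α ∈ Set.Icc (0 : ℝ) 1 ∧ R (α • x + (1 - α) • z) y} ∧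
  IsClosed {α : ℝ | α ∈ Set.Icc (0 : ℝ) 1 ∧ R y (α • x + (1 - α) • z)}

/-- (A4) Invariance with respect to a common reference point. -/
def A4 (R : Linf → Linf → Prop) : Prop :=
  ∀ x y : Linf, ∀ θ : ℝ, R x y → R (x + cst θ) (y + cst θ)

/-- (A5) Convexity. -/
def A5 (R : Linf → Linf → Prop) : Prop :=
  ∀ x y : Linf, ∀ θ lam : ℝ, lam ∈ Set.Icc (0 : ℝ) 1 →
    R x (cst θ) → R y (cst θ) → R (lam • x + (1 - lam) • y) (cst θ)

/-- Axioms (A1)-(A5) together. -/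
def A15 (R : Linf → Linf → Prop) : Prop := A1 R ∧ A2 R ∧ A3 R ∧ A4 R ∧ A5 R

/-- (MC) Monotone continuity. -/
def MC (R : Linf → Linf → Prop) : Prop :=
  ∀ (x : Linf) (θ : ℝ), SPref R x (cst θ) →
    ∀ E : ℕ → Set ℕ, (∀ n, E (n + 1) ⊆ E n) → (⋂ n, E n) = ∅ →
      ∀ k : ℝ, ∃ n₀ : ℕ, SPref R (patch k (E n₀) x) (cst θ)

/-- (IDIS) Invariance with respect to delaying improving sequences. -/
def IDIS (R : Linf → Linf → Prop) : Prop :=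
  ∀ x d : Linf, R (x + d) x → R (x + delaySeq d) x

/-- (ISU) Invariance with respect to the scale of utils. -/
def ISU (R : Linf → Linf → Prop) : Prop :=
  ∀ x y : Linf, ∀ α : ℝ, 0 ≤ α → R x y → R (α • x) (α • y)

/-- (IOU) Invariance with respect to individual origins of utilities. -/
def IOU (R : Linf → Linf → Prop) : Prop :=
  ∀ x y z : Linf, (R x y ∧ R y x) → (R (x + z) (y + z) ∧ R (y + z) (x + z))

/-- Strong monotonicity. -/
def StrongMono (R : Linf → Linf → Prop) : Prop :=
  (∀ x y : Linf, (∀ n, y n ≤ x n) → R x y) ∧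
  ∀ x y : Linf, (∀ n, y n ≤ x n) → x ≠ y → SPref R x y

/-- (ITIS) Invariance with respect to applying `T` to improving sequences. -/
def ITIS (T : Linf → Linf) (R : Linf → Linf → Prop) : Prop :=
  ∀ x d : Linf, R (x + d) x → R (x + T d) x

/-- Time invariance: `x ∼ (x₁, x₂, x₃, ...)`. -/
def TimeInv (R : Linf → Linf → Prop) : Prop :=
  ∀ x : Linf, R x (shiftSeq x) ∧ R (shiftSeq x) x

/-- `I` is a constant equivalent for `≿`: `x ∼ I(x)` for every `x`. -/
def ConstEquiv (R : Linf → Linf → Prop) (I : Linf → ℝ) : Prop :=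
  ∀ x, R x (cst (I x)) ∧ R (cst (I x)) x

/-- `I` represents `≿`: `x ≿ y ↔ I(x) ≥ I(y)`. -/
def Represents (R : Linf → Linf → Prop) (I : Linf → ℝ) : Prop :=
  ∀ x y, R x y ↔ I y ≤ I x

/-! ### Discount structures -/

/-- A functional `p ∈ ba(ℕ)` is positive. -/
def IsPos (p : Ba) : Prop := ∀ x : Linf, (∀ n, 0 ≤ x n) → 0 ≤ p x

/-- `Δ`: the set of discount structures. -/
def Delta : Set Ba := {p | IsPos p ∧ p (cst 1) = 1}

/-- `Δ^σ`: countably additive discount structures. -/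
def DeltaSigma : Set Ba :=
  {p ∈ Delta | ∃ f : ℕ → ℝ, (∀ n, 0 ≤ f n) ∧ Summable f ∧ (∑' n, f n) = 1 ∧
    ∀ x : Linf, p x = ∑' n, f n * x n}

/-- `ℬ`: the set of Banach–Mazur limits. -/
def BM : Set Ba := {p ∈ Delta | ∀ x : Linf, p (shiftSeq x) = p x}

/-- The exponential discounting functionals with parameter `δ ∈ [0,1)`. -/
def Geom : Set Ba := {p | ∃ δ ∈ Set.Ico (0 : ℝ) 1, ∀ x : Linf, p x = discSum δ x}

/-- `Δ(T*)`: discount structures that are eigenvectors of the adjoint of `T`,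
expressed via the duality `⟨T x, p⟩ = λ ⟨x, p⟩`. -/
def DeltaT (T : Linf → Linf) : Set Ba :=
  {p ∈ Delta | ∃ lam : ℝ, ∀ x : Linf, p (T x) = lam * p x}

/-- A map `T : l∞ → l∞` is positive. -/
def PosMap (T : Linf → Linf) : Prop :=
  ∀ x : Linf, (∀ n, 0 ≤ x n) → ∀ n, 0 ≤ T x n

/-- `ca(ℕ)`: countably additive elements of `ba(ℕ)`. -/
def caSet : Set Ba :=
  {μ | ∀ A : ℕ → Set ℕ, (∀ n, A (n + 1) ⊆ A n) → (⋂ n, A n) = ∅ →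
    Filter.Tendsto (fun n => μ (indic (A n))) Filter.atTop (nhds 0)}

/-- `pa(ℕ)`: purely finitely additive elements of `ba(ℕ)`. -/
def paSet : Set Ba := {μ | ∀ n : ℕ, μ (indic {n}) = 0}

/-- `c` is grounded on `D`. -/
def Grounded (D : Set Ba) (c : Ba → ℝ≥0∞) : Prop := (⨅ p ∈ D, c p) = 0

/-- `c` is grounded on `[0,1]`. -/
def Grounded01 (c : ℝ → ℝ≥0∞) : Prop := (⨅ δ ∈ Set.Icc (0 : ℝ) 1, c δ) = 0

/-- Maxmin form: `I(x) = min_{p ∈ D} ⟨x,p⟩`, the minimum being attained. -/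
def MinForm (D : Set Ba) (I : Linf → ℝ) : Prop :=
  ∀ x, (∃ p ∈ D, I x = p x) ∧ ∀ p ∈ D, I x ≤ p x

/-- Variational form: `I(x) = min_{p ∈ D} {⟨x,p⟩ + c(p)}`, the minimum being attained. -/
def VarMinForm (D : Set Ba) (c : Ba → ℝ≥0∞) (I : Linf → ℝ) : Prop :=
  ∀ x, (∃ p ∈ D, (I x : EReal) = (p x : EReal) + (c p : EReal)) ∧
    ∀ p ∈ D, (I x : EReal) ≤ (p x : EReal) + (c p : EReal)

/-- Maxmin discounting form over a set of discount factors `E ⊆ [0,1)`. -/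
def MinDelta (E : Set ℝ) (I : Linf → ℝ) : Prop :=
  ∀ x, (∃ δ ∈ E, I x = discSum δ x) ∧ ∀ δ ∈ E, I x ≤ discSum δ x

/-- Variational discounting form over discount factors. -/
def VarMinDelta (E : Set ℝ) (c : ℝ → ℝ≥0∞) (I : Linf → ℝ) : Prop :=
  ∀ x, (∃ δ ∈ E, (I x : EReal) = (discSum δ x : EReal) + (c δ : EReal)) ∧
    ∀ δ ∈ E, (I x : EReal) ≤ (discSum δ x : EReal) + (c δ : EReal)

/-- Convexity for `ℝ≥0∞`-valued functions on a subset of `ba(ℕ)`. -/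
def ConvexENN (D : Set Ba) (g : Ba → ℝ≥0∞) : Prop :=
  ∀ p ∈ D, ∀ q ∈ D, ∀ a b : ℝ, 0 ≤ a → 0 ≤ b → a + b = 1 →
    g (a • p + b • q) ≤ ENNReal.ofReal a * g p + ENNReal.ofReal b * g q


/-!
Applying IPIS at the constant base point `I x` with `d = x - I x` shows that every
rearrangement `x_σ` is weakly preferred to `I x`. Fix `A ⊆ ℕ` infinite and coinfinite and let
`c = I 1_A`. The indicators of the residue classes mod 3 are rearrangements of `1_A`, so by
convexity their average, the constant `1/3`, is weakly preferred to `c`: `c ≤ 1/3`. On the other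
hand `1_{Aᶜ}` is a rearrangement of `1_A`, so `d = 1_{Aᶜ} - 1_A` improves on `1_A`; permuting `d`
by a swap of `A` and `Aᶜ` gives `1_A + d_σ = 3 • 1_A - 1`, whose constant equivalent is
`3c - 1` by ISU and (A4). Hence `3c - 1 ≥ c`, i.e. `c ≥ 1/2`.
-/

@[simp] lemma cst_apply (θ : ℝ) (n : ℕ) : cst θ n = θ := rfl

@[simp] lemma permSeq_apply (σ : Equiv.Perm ℕ) (x : Linf) (n : ℕ) :
    permSeq σ x n = x (σ n) := rfl

open Classical in
@[simp] lemma indic_apply (A : Set ℕ) (n : ℕ) : indic A n = if n ∈ A then 1 else 0 :=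
  Set.indicator_apply A (fun _ => (1 : ℝ)) n

lemma permSeq_indic (σ : Equiv.Perm ℕ) (A : Set ℕ) : permSeq σ (indic A) = indic (σ ⁻¹' A) :=
  rfl

lemma smul_cst (a θ : ℝ) : a • cst θ = cst (a * θ) := rfl

lemma cst_add (a b : ℝ) : cst a + cst b = cst (a + b) := rfl

lemma exists_perm_preimage_eq {α : Type*} [Countable α] {A B : Set α}
    (hA : A.Infinite) (hAc : Aᶜ.Infinite) (hB : B.Infinite) (hBc : Bᶜ.Infinite) :
    ∃ σ : Equiv.Perm α, σ ⁻¹' B = A := by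
  classical
  have : Infinite A := hA.to_subtype
  have : Infinite ↥Aᶜ := hAc.to_subtype
  have : Infinite B := hB.to_subtype
  have : Infinite ↥Bᶜ := hBc.to_subtype
  obtain ⟨e⟩ : Nonempty (A ≃ B) := Cardinal.eq.1 (by simp [Cardinal.mk_eq_aleph0])
  obtain ⟨f⟩ : Nonempty (↥Aᶜ ≃ ↥Bᶜ) := Cardinal.eq.1 (by simp [Cardinal.mk_eq_aleph0])
  refine ⟨Equiv.subtypeCongr e f, Set.ext fun a => ?_⟩
  by_cases h : a ∈ A
  · simp [Equiv.subtypeCongr, Equiv.sumCompl, h]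
  · simp [Equiv.subtypeCongr, Equiv.sumCompl, h]
    exact (f ⟨a, h⟩).2

lemma infinite_setOf_mod_eq {M k : ℕ} (hk : k < M) : {i | i % M = k}.Infinite :=
  Nat.frequently_atTop_iff_infinite.1 (Nat.frequently_mod_eq hk)

lemma infinite_compl_setOf_mod_eq {M k : ℕ} (hM : 1 < M) (hk : k < M) :
    {i | i % M = k}ᶜ.Infinite := by
  have hne : (k + 1) % M ≠ k := by
    rcases Nat.lt_or_ge (k + 1) M with h | h
    · rw [Nat.mod_eq_of_lt h]; omega
    · obtain rfl : M = k + 1 := by omega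
      rw [Nat.mod_self]; omega
  refine (infinite_setOf_mod_eq (Nat.mod_lt (k + 1) (by omega : 0 < M))).mono fun i hi => ?_
  simp_all

def IPIS (R : Linf → Linf → Prop) : Prop :=
  ∀ σ : Equiv.Perm ℕ, ∀ x d : Linf, R (x + d) x → R (x + permSeq σ d) x

section Preference

variable {R : Linf → Linf → Prop}

lemma le_of_rel_cst (h2 : A2 R) (h4 : A4 R) (hisu : ISU R) {a b : ℝ}
    (h : R (cst a) (cst b)) : b ≤ a := by
  by_contra! hab
  -- the affine map `t ↦ (t - a) / (b - a)` sends `a, b` to `0, 1`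
  have hscaled := h4 _ _ (-(a / (b - a))) (hisu _ _ (b - a)⁻¹ (by simp [hab.le]) h)
  simp only [smul_cst, cst_add] at hscaled
  exact h2.2.2 (by convert hscaled using 2 <;> field_simp <;> ring)

lemma convex_setOf_rel_cst (h5 : A5 R) (θ : ℝ) : Convex ℝ {x | R x (cst θ)} := by
  intro x hx y hy a b ha hb hab
  obtain rfl : b = 1 - a := by linarith
  exact h5 x y θ a ⟨ha, by linarith⟩ hx hy

lemma rel_permSeq_cst (hipis : IPIS R) {I : Linf → ℝ} (hI : ConstEquiv R I)
    (σ : Equiv.Perm ℕ) (x : Linf) : R (permSeq σ x) (cst (I x)) := by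
  have h := hipis σ (cst (I x)) (x - cst (I x)) (by simpa using (hI x).1)
  convert h using 1
  ext n
  simp

lemma constEquiv_indic_le_third (h2 : A2 R) (h4 : A4 R) (h5 : A5 R) (hisu : ISU R)
    (hipis : IPIS R) {I : Linf → ℝ} (hI : ConstEquiv R I) {A : Set ℕ}
    (hA : A.Infinite) (hAc : Aᶜ.Infinite) : I (indic A) ≤ 1 / 3 := by
  have hclass : ∀ k ∈ Finset.range 3, indic {i | i % 3 = k} ∈ {x | R x (cst (I (indic A)))} := by
    intro k hk
    have hk : k < 3 := Finset.mem_range.1 hk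
    obtain ⟨σ, hσ⟩ := exists_perm_preimage_eq (infinite_setOf_mod_eq hk)
      (infinite_compl_setOf_mod_eq (by norm_num) hk) hA hAc
    simpa [← hσ, permSeq_indic] using rel_permSeq_cst hipis hI σ (indic A)
  have havg := (convex_setOf_rel_cst h5 _).sum_mem (w := fun _ => 1 / 3)
    (by norm_num) (by norm_num) hclass
  have hsum : ∑ k ∈ Finset.range 3, (1 / 3 : ℝ) • indic {i | i % 3 = k} = cst (1 / 3) := by
    ext n
    have := Nat.mod_lt n (by norm_num : 0 < 3)
    interval_cases h : n % 3 <;> simp [Finset.sum_range_succ, h]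
  rw [Set.mem_ofPred_eq, hsum] at havg
  exact le_of_rel_cst h2 h4 hisu havg

lemma half_le_constEquiv_indic (h1 : A1 R) (h2 : A2 R) (h4 : A4 R) (hisu : ISU R)
    (hipis : IPIS R) {I : Linf → ℝ} (hI : ConstEquiv R I) {A : Set ℕ}
    (hA : A.Infinite) (hAc : Aᶜ.Infinite) : 1 / 2 ≤ I (indic A) := by
  set c := I (indic A)
  obtain ⟨σ, hσ⟩ := exists_perm_preimage_eq hAc (by rwa [compl_compl]) hA hAc
  have hswap : R (indic Aᶜ) (indic A) := by
    have := rel_permSeq_cst hipis hI σ (indic A)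
    rw [permSeq_indic, hσ] at this
    exact h1.2 _ _ _ this (hI _).2
  have hgain := hipis σ (indic A) (indic Aᶜ - indic A) (by rwa [add_sub_cancel])
  have hperm : indic A + permSeq σ (indic Aᶜ - indic A) = (3 : ℝ) • indic A + cst (-1) := by
    ext n
    have hσn : σ n ∈ A ↔ n ∉ A := Set.ext_iff.1 hσ n
    by_cases h : n ∈ A <;> norm_num [h, hσn]
  rw [hperm] at hgain
  have hupper := h4 _ _ (-1) (hisu _ _ 3 (by norm_num) (hI (indic A)).2)
  rw [smul_cst, cst_add] at hupper
  have := le_of_rel_cst h2 h4 hisu (h1.2 _ _ _ hupper (h1.2 _ _ _ hgain (hI _).1))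
  linarith

end Preference

/-- Proposition: impossibility for IPIS: no binary relation on `l∞`
satisfying (A1)-(A5), ISU and invariance with respect to (arbitrary) permutations of
improving sequences admits a constant equivalent. -/
theorem stmt15 (R : Linf → Linf → Prop) (h15 : A15 R) (hisu : ISU R)
    (hipis : ∀ σ : Equiv.Perm ℕ, ∀ x d : Linf, R (x + d) x → R (x + permSeq σ d) x) :
    ¬ ∃ I : Linf → ℝ, ∀ x : Linf, R x (cst (I x)) ∧ R (cst (I x)) x := by
  rintro ⟨I, hI⟩
  obtain ⟨h1, h2, -, h4, h5⟩ := h15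
  have hA : {i | i % 3 = 0}.Infinite := infinite_setOf_mod_eq (by norm_num)
  have hAc : {i | i % 3 = 0}ᶜ.Infinite := infinite_compl_setOf_mod_eq (by norm_num) (by norm_num)
  linarith [constEquiv_indic_le_third h2 h4 h5 hisu hipis hI hA hAc,
    half_le_constEquiv_indic h1 h2 h4 hisu hipis hI hA hAc]

end
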